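/- Let (Ω,F,P) be a probability space, F_1, F_2 ⊆ F sub-σ-fields, and C_1 ⊆ C_2 measurable subsets of Ω. If F_1, F_2 are a nonsingular pair within C_2, then they are a nonsingular pair within C_1. -/

import Mathlib

open MeasureTheory Set
open scoped ENNReal

noncomputable section

/-- `F1, F2` are a nonsingular pair within `C`: there is a measurable
`f : Ω × Ω → [0,∞)` with `P(A ∩ B ∩ C) = ∫_{A×B} f d(P⊗P)` for all
`A ∈ F1`, `B ∈ F2`. -/
def NonsingularPair {Ω : Type*} [inst : MeasurableSpace Ω] (P : Measure Ω)
    (F1 F2 : MeasurableSpace Ω) (C : Set Ω) : Prop :=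
  ∃ f : Ω × Ω → ℝ≥0∞,
    @Measurable _ _ (@Prod.instMeasurableSpace Ω Ω inst inst) _ f ∧
    ∀ A B : Set Ω, MeasurableSet[F1] A → MeasurableSet[F2] B →
      P (A ∩ B ∩ C) = ∫⁻ p in A ×ˢ B, f p ∂(@Measure.prod Ω Ω inst inst P P)

/-! Being a nonsingular pair within `C` means that the law of `ω ↦ (ω, ω)` under `P`
restricted to `C`, seen on `F1 ⊗ F2`, is absolutely continuous with respect to `P ⊗ P`
on `F1 ⊗ F2`: the identity on rectangles determines the law on all of `F1 ⊗ F2` by the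
π-λ theorem, and conversely a Radon–Nikodym derivative is a density. Shrinking `C` shrinks
that law, so absolute continuity persists. -/

section Trim

variable {α : Type*} {m mα : MeasurableSpace α}

theorem absolutelyContinuous_trim_of_forall_eq_setLIntegral (hm : m ≤ mα)
    {μ : Measure[mα] α} {ν : Measure[m] α} {f : α → ℝ≥0∞}
    (hν : ∀ s, MeasurableSet[m] s → ν s = ∫⁻ x in s, f x ∂μ) : ν ≪ μ.trim hm := by
  refine Measure.AbsolutelyContinuous.mk fun s hs hμs => ?_
  rw [trim_measurableSet_eq hm hs] at hμs
  rw [hν s hs, Measure.restrict_eq_zero.mpr hμs, lintegral_zero_measure]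

theorem exists_forall_eq_setLIntegral_of_absolutelyContinuous_trim (hm : m ≤ mα)
    {μ : Measure[mα] α} [IsFiniteMeasure μ] {ν : Measure[m] α} [IsFiniteMeasure ν]
    (hνμ : ν ≪ μ.trim hm) :
    ∃ g : α → ℝ≥0∞, Measurable[m] g ∧ ∀ s, MeasurableSet[m] s → ν s = ∫⁻ x in s, g x ∂μ :=
  ⟨ν.rnDeriv (μ.trim hm), Measure.measurable_rnDeriv _ _, fun s hs => by
    rw [← setLIntegral_trim hm (Measure.measurable_rnDeriv _ _) hs,
      Measure.setLIntegral_rnDeriv' hνμ hs]⟩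

end Trim

theorem MeasurableSpace.prod_mono {α β : Type*} {m₁ m₂ : MeasurableSpace α}
    {n₁ n₂ : MeasurableSpace β} (hm : m₁ ≤ m₂) (hn : n₁ ≤ n₂) : m₁.prod n₁ ≤ m₂.prod n₂ :=
  sup_le_sup (MeasurableSpace.comap_mono hm) (MeasurableSpace.comap_mono hn)

section Diagonal

variable {Ω : Type*} {F1 F2 : MeasurableSpace Ω} {mΩ : MeasurableSpace Ω}

def diagonalMeasure (P : Measure[mΩ] Ω) (F1 F2 : MeasurableSpace Ω) (C : Set Ω) :
    Measure[F1.prod F2] (Ω × Ω) :=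
  @Measure.map _ _ mΩ (F1.prod F2) (fun ω => (ω, ω)) (P.restrict C)

instance isFiniteMeasure_diagonalMeasure (P : Measure[mΩ] Ω) [IsFiniteMeasure P] (C : Set Ω) :
    IsFiniteMeasure (diagonalMeasure P F1 F2 C) := by
  unfold diagonalMeasure; infer_instance

theorem measurable_diag_of_le (h1 : F1 ≤ mΩ) (h2 : F2 ≤ mΩ) :
    Measurable[mΩ, F1.prod F2] fun ω : Ω => (ω, ω) :=
  (measurable_id'' h1).prodMk (measurable_id'' h2)

theorem diagonalMeasure_prod (P : Measure[mΩ] Ω) (C : Set Ω) (h1 : F1 ≤ mΩ) (h2 : F2 ≤ mΩ)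
    {A B : Set Ω} (hA : MeasurableSet[F1] A) (hB : MeasurableSet[F2] B) :
    diagonalMeasure P F1 F2 C (A ×ˢ B) = P (A ∩ B ∩ C) := by
  rw [diagonalMeasure, Measure.map_apply (measurable_diag_of_le h1 h2)
      (@MeasurableSet.prod _ _ F1 F2 _ _ hA hB)]
  exact Measure.restrict_apply ((h1 A hA).inter (h2 B hB))

theorem diagonalMeasure_mono (P : Measure[mΩ] Ω) {C1 C2 : Set Ω} (h1 : F1 ≤ mΩ)
    (h2 : F2 ≤ mΩ) (hC : C1 ⊆ C2) :
    diagonalMeasure P F1 F2 C1 ≤ diagonalMeasure P F1 F2 C2 :=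
  Measure.map_mono (Measure.restrict_mono hC le_rfl) (measurable_diag_of_le h1 h2)

theorem diagonalMeasure_eq_trim_withDensity (P : Measure[mΩ] Ω) [IsFiniteMeasure P]
    (C : Set Ω) (h1 : F1 ≤ mΩ) (h2 : F2 ≤ mΩ) {f : Ω × Ω → ℝ≥0∞}
    (hf : ∀ A B, MeasurableSet[F1] A → MeasurableSet[F2] B →
      P (A ∩ B ∩ C) = ∫⁻ p in A ×ˢ B, f p ∂(P.prod P)) :
    diagonalMeasure P F1 F2 C =
      ((P.prod P).withDensity f).trim (MeasurableSpace.prod_mono h1 h2) := by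
  have hrect : ∀ {A B}, MeasurableSet[F1] A → MeasurableSet[F2] B →
      diagonalMeasure P F1 F2 C (A ×ˢ B) =
        ((P.prod P).withDensity f).trim (MeasurableSpace.prod_mono h1 h2) (A ×ˢ B) :=
    fun hA hB => by
      rw [diagonalMeasure_prod P C h1 h2 hA hB,
        trim_measurableSet_eq _ (@MeasurableSet.prod _ _ F1 F2 _ _ hA hB),
        withDensity_apply _ ((h1 _ hA).prod (h2 _ hB)), hf _ _ hA hB]
  refine ext_of_generate_finite _ (@generateFrom_prod _ _ F1 F2).symm
    (@isPiSystem_prod _ _ F1 F2) ?_ ?_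
  · rintro _ ⟨A, hA, B, hB, rfl⟩
    exact hrect hA hB
  · simpa only [univ_prod_univ] using
      hrect (@MeasurableSet.univ _ F1) (@MeasurableSet.univ _ F2)

theorem nonsingularPair_iff_absolutelyContinuous (P : Measure[mΩ] Ω) [IsFiniteMeasure P]
    (C : Set Ω) (h1 : F1 ≤ mΩ) (h2 : F2 ≤ mΩ) :
    NonsingularPair P F1 F2 C ↔
      diagonalMeasure P F1 F2 C ≪ (P.prod P).trim (MeasurableSpace.prod_mono h1 h2) := by
  constructor
  · rintro ⟨f, -, hf⟩
    refine absolutelyContinuous_trim_of_forall_eq_setLIntegral _ (f := f) fun s hs => ?_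
    rw [diagonalMeasure_eq_trim_withDensity P C h1 h2 hf, trim_measurableSet_eq _ hs,
      withDensity_apply _ (MeasurableSpace.prod_mono h1 h2 s hs)]
  · intro hac
    obtain ⟨g, hg, hdiag⟩ := exists_forall_eq_setLIntegral_of_absolutelyContinuous_trim _ hac
    refine ⟨g, hg.mono (MeasurableSpace.prod_mono h1 h2) le_rfl, fun A B hA hB => ?_⟩
    rw [← diagonalMeasure_prod P C h1 h2 hA hB,
      hdiag _ (@MeasurableSet.prod _ _ F1 F2 _ _ hA hB)]

end Diagonal

theorem stmt7_general {Ω : Type*} [inst : MeasurableSpace Ω] (P : Measure Ω)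
    [IsProbabilityMeasure P] (C1 C2 : Set Ω) (hsub : C1 ⊆ C2)
    (F1 F2 : MeasurableSpace Ω) (h1 : F1 ≤ inst) (h2 : F2 ≤ inst)
    (h : @NonsingularPair Ω inst P F1 F2 C2) :
    @NonsingularPair Ω inst P F1 F2 C1 := by
  rw [nonsingularPair_iff_absolutelyContinuous P _ h1 h2] at h ⊢
  exact (Measure.absolutelyContinuous_of_le (diagonalMeasure_mono P h1 h2 hsub)).trans h

theorem stmt7 {Ω : Type*} [inst : MeasurableSpace Ω] (P : Measure Ω)
    [IsProbabilityMeasure P] (C1 C2 : Set Ω)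
    (hC1 : MeasurableSet C1) (hC2 : MeasurableSet C2) (hsub : C1 ⊆ C2)
    (F1 F2 : MeasurableSpace Ω) (h1 : F1 ≤ inst) (h2 : F2 ≤ inst)
    (h : @NonsingularPair Ω inst P F1 F2 C2) :
    @NonsingularPair Ω inst P F1 F2 C1 :=
  stmt7_general (inst := inst) P C1 C2 hsub F1 F2 h1 h2 h
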